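/- Fix a linear order on U and let κ : Ω_j → Γ be a canonical labeling map for the action of Γ on Ω_j (X ≅ Y implies X^{κ(X)} = Y^{κ(Y)}). For X with underline(X) = U_{j−1} ∪ {p}, p in the Aut(U_{j−1})-orbit of u_j, choose ν(p) ∈ Aut(U_{j−1}) with p^{ν(p)} = u_j, let q be the minimum element of U with q^{κ(X)^{-1}ν(p)} in the Aut(U_j)-orbit of u_j, and define M(X) to be the restriction of X to underline(X) \ {q^{κ(X)^{-1}}}. Then M is a well-defined canonical extension map on such X: (M1) X e M(X), and (M2) if X ≅ Y (both with domains of this form) then (X,M(X)) ≅ (Y,M(Y)) under the diagonal action of Γ. -/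
import Mathlib


/-!
We model the setting of the paper: `U` and `R` are finite sets, `Γ` is a
subgroup of `Sym(U)` (here `Equiv.Perm U`).  A partial assignment `X : W → R`
with `W ⊆ U` is modeled as a function `U → Option R` whose domain
(`underline X`) is the set of points where it is `some`.  The paper's right
action is rendered as the corresponding (mirror) left action:
`(γ • X)(u) = X(γ⁻¹ u)`, points are acted on by `u ↦ γ u` and sets by images.
-/

namespace PrefixAssignment

variable {U R : Type*}

/-- The domain `underline X` of a partial assignment. -/
def dom (X : U → Option R) : Set U := {u | X u ≠ none}

/-- The action of a permutation `γ` on a partial assignment: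
`(psmul γ X)(u) = X(γ⁻¹ u)` (left-action form of the paper's
`X^γ(u) = X(u^{γ⁻¹})`). -/
def psmul (γ : Equiv.Perm U) (X : U → Option R) : U → Option R :=
  fun u => X (γ⁻¹ u)

open scoped Classical in
/-- Restriction of a partial assignment to a set `W` of variables. -/
noncomputable def restrict (X : U → Option R) (W : Set U) : U → Option R :=
  fun u => if u ∈ W then X u else none

/-- `Uset u j = U_j = {u_1, …, u_j}` (`u` is 0-indexed). -/
def Uset {k : ℕ} (u : Fin k → U) (j : ℕ) : Set U :=
  {x | ∃ i : Fin k, (i : ℕ) < j ∧ u i = x}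

/-- `Ω_j`: partial assignments whose domain lies in the `Γ`-orbit of `U_j`. -/
def OmegaJ (Γ : Subgroup (Equiv.Perm U)) {k : ℕ} (u : Fin k → U) (j : ℕ)
    (X : U → Option R) : Prop :=
  ∃ γ ∈ Γ, ⇑γ '' dom X = Uset u j

/-- The extension relation `e ⊆ Ω_j × Ω_{j-1}`:  `erel Γ u j X S` holds iff
there is `γ ∈ Γ` taking the domain of `X` to `U_j`, the domain of `S` to
`U_{j-1}`, and the restriction of `γ • X` to `U_{j-1}` to `γ • S`. -/
def erel (Γ : Subgroup (Equiv.Perm U)) {k : ℕ} (u : Fin k → U) (j : ℕ)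
    (X S : U → Option R) : Prop :=
  ∃ γ ∈ Γ, ⇑γ '' dom X = Uset u j ∧ ⇑γ '' dom S = Uset u (j - 1) ∧
    restrict (psmul γ X) (Uset u (j - 1)) = psmul γ S

/-- The setwise stabilizer `Aut(W)` of `W ⊆ U` in `Γ`. -/
def AutSet (Γ : Subgroup (Equiv.Perm U)) (W : Set U) : Set (Equiv.Perm U) :=
  {γ | γ ∈ Γ ∧ ⇑γ '' W = W}

/-- The automorphism group (stabilizer) `Aut(S)` of a partial assignment `S` in `Γ`. -/
def AutAsg (Γ : Subgroup (Equiv.Perm U)) (S : U → Option R) : Set (Equiv.Perm U) :=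
  {γ | γ ∈ Γ ∧ psmul γ S = S}

/-- The orbit of a point `p ∈ U` under a set `A` of permutations. -/
def ptOrbit (A : Set (Equiv.Perm U)) (p : U) : Set U :=
  {q | ∃ γ ∈ A, γ p = q}



section Helpers

variable {U R : Type*}

lemma psmul_mul (γ δ : Equiv.Perm U) (X : U → Option R) :
    psmul (γ * δ) X = psmul γ (psmul δ X) := by
  funext v; simp [psmul, mul_inv_rev]

lemma psmul_one (X : U → Option R) : psmul (1 : Equiv.Perm U) X = X := by
  funext v; simp [psmul]

lemma dom_psmul (γ : Equiv.Perm U) (X : U → Option R) :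
    dom (psmul γ X) = ⇑γ '' dom X := by
  ext v
  constructor
  · intro h; exact ⟨γ⁻¹ v, h, by simp⟩
  · rintro ⟨w, hw, rfl⟩; simpa [dom, psmul] using hw

lemma mem_image_perm_iff (γ : Equiv.Perm U) (W : Set U) (v : U) :
    v ∈ ⇑γ '' W ↔ γ⁻¹ v ∈ W := by
  constructor
  · rintro ⟨w, hw, rfl⟩; simpa using hw
  · intro h; exact ⟨γ⁻¹ v, h, by simp⟩

lemma psmul_restrict (γ : Equiv.Perm U) (X : U → Option R) (W : Set U) :
    psmul γ (restrict X W) = restrict (psmul γ X) (⇑γ '' W) := by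
  classical
  funext v
  simp only [psmul, restrict, mem_image_perm_iff]

lemma dom_restrict (X : U → Option R) (W : Set U) :
    dom (restrict X W) = dom X ∩ W := by
  classical
  ext v
  by_cases h : v ∈ W <;> simp [dom, restrict, h]

lemma AutSet_mul_mem {Γ : Subgroup (Equiv.Perm U)} {W : Set U} {a b : Equiv.Perm U}
    (ha : a ∈ AutSet Γ W) (hb : b ∈ AutSet Γ W) : a * b ∈ AutSet Γ W := by
  refine ⟨Γ.mul_mem ha.1 hb.1, ?_⟩
  rw [show ⇑(a * b) = ⇑a ∘ ⇑b from rfl, Set.image_comp, hb.2, ha.2]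

lemma AutSet_inv_mem {Γ : Subgroup (Equiv.Perm U)} {W : Set U} {a : Equiv.Perm U}
    (ha : a ∈ AutSet Γ W) : a⁻¹ ∈ AutSet Γ W := by
  refine ⟨Γ.inv_mem ha.1, ?_⟩
  conv_lhs => rw [← ha.2]
  rw [← Set.image_comp]
  simp

lemma ptOrbit_smul_iff {Γ : Subgroup (Equiv.Perm U)} {W : Set U} {τ : Equiv.Perm U}
    (hτ : τ ∈ AutSet Γ W) (p q : U) :
    τ q ∈ ptOrbit (AutSet Γ W) p ↔ q ∈ ptOrbit (AutSet Γ W) p := by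
  constructor
  · rintro ⟨α, hα, hαp⟩
    refine ⟨τ⁻¹ * α, AutSet_mul_mem (AutSet_inv_mem hτ) hα, ?_⟩
    simp [Equiv.Perm.mul_apply, hαp]
  · rintro ⟨α, hα, hαp⟩
    exact ⟨τ * α, AutSet_mul_mem hτ hα, by simp [Equiv.Perm.mul_apply, hαp]⟩

end Helpers

/-- The map `M` of test (T1') is a canonical extension map: deleting the value
of the variable `(κ X)⁻¹ q`, where `q` is the minimum element of `U` with
`(ν(p) (κ X)⁻¹) q` in the `Aut(U_j)`-orbit of `u_j`, yields a map satisfying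
(M1) `X e M(X)` and (M2) `X ≅ Y → (X, M X) ≅ (Y, M Y)`. -/
theorem stmt_11 {U R : Type*} [Finite U] [Finite R] [LinearOrder U]
    (Γ : Subgroup (Equiv.Perm U)) {k : ℕ} (u : Fin k → U)
    (hu : Function.Injective u)
    (j : ℕ) (hj1 : 1 ≤ j) (hjk : j ≤ k)
    (κ : (U → Option R) → Equiv.Perm U)
    (hκΓ : ∀ X, OmegaJ Γ u j X → κ X ∈ Γ)
    (hκ : ∀ X Y : U → Option R, OmegaJ Γ u j X → OmegaJ Γ u j Y →
      (∃ γ ∈ Γ, psmul γ X = Y) → psmul (κ X) X = psmul (κ Y) Y)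
    (ν : U → Equiv.Perm U)
    (hν : ∀ p ∈ ptOrbit (AutSet Γ (Uset u (j - 1))) (u ⟨j - 1, by omega⟩),
      ν p ∈ AutSet Γ (Uset u (j - 1)) ∧ (ν p) p = u ⟨j - 1, by omega⟩)
    (qsel : (U → Option R) → U)
    (hqsel : ∀ X p, OmegaJ Γ u j X →
      p ∈ ptOrbit (AutSet Γ (Uset u (j - 1))) (u ⟨j - 1, by omega⟩) →
      dom X = Uset u (j - 1) ∪ {p} →
      IsLeast {q : U | (ν p * (κ X)⁻¹) q ∈
        ptOrbit (AutSet Γ (Uset u j)) (u ⟨j - 1, by omega⟩)} (qsel X))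
    (M : (U → Option R) → (U → Option R))
    (hM : ∀ X, M X = restrict X (dom X \ {(κ X)⁻¹ (qsel X)})) :
    (∀ X p, OmegaJ Γ u j X →
      p ∈ ptOrbit (AutSet Γ (Uset u (j - 1))) (u ⟨j - 1, by omega⟩) →
      dom X = Uset u (j - 1) ∪ {p} →
      erel Γ u j X (M X)) ∧
    (∀ X Y pX pY, OmegaJ Γ u j X → OmegaJ Γ u j Y →
      pX ∈ ptOrbit (AutSet Γ (Uset u (j - 1))) (u ⟨j - 1, by omega⟩) →
      pY ∈ ptOrbit (AutSet Γ (Uset u (j - 1))) (u ⟨j - 1, by omega⟩) →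
      dom X = Uset u (j - 1) ∪ {pX} →
      dom Y = Uset u (j - 1) ∪ {pY} →
      (∃ γ ∈ Γ, psmul γ X = Y) →
      ∃ γ ∈ Γ, psmul γ X = Y ∧ psmul γ (M X) = M Y) := by
  classical
  have hjm : j - 1 < k := by omega
  have hUj : Uset u j = Uset u (j - 1) ∪ {u ⟨j - 1, hjm⟩} := by
    ext x
    simp only [Uset, Set.mem_setOf_eq, Set.mem_union, Set.mem_singleton_iff]
    constructor
    · rintro ⟨i, hi, rfl⟩
      by_cases h : (i : ℕ) < j - 1
      · exact Or.inl ⟨i, h, rfl⟩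
      · have hieq : i = ⟨j - 1, hjm⟩ := Fin.ext (show (i : ℕ) = j - 1 by omega)
        exact Or.inr (by rw [hieq])
    · rintro (⟨i, hi, rfl⟩ | rfl)
      · exact ⟨i, by omega, rfl⟩
      · exact ⟨⟨j - 1, hjm⟩, show j - 1 < j by omega, rfl⟩
  have hujnot : u ⟨j - 1, hjm⟩ ∉ Uset u (j - 1) := by
    rintro ⟨i, hi, hEq⟩
    have hieq := hu hEq
    rw [hieq] at hi
    simp at hi
  have hdiff : Uset u j \ {u ⟨j - 1, hjm⟩} = Uset u (j - 1) := by
    rw [hUj]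
    ext x
    simp only [Set.mem_diff, Set.mem_union, Set.mem_singleton_iff]
    constructor
    · rintro ⟨h1 | rfl, h2⟩
      · exact h1
      · exact absurd rfl h2
    · intro hx
      exact ⟨Or.inl hx, fun h => hujnot (h ▸ hx)⟩
  have hνdom : ∀ (Z : U → Option R) (p : U),
      p ∈ ptOrbit (AutSet Γ (Uset u (j - 1))) (u ⟨j - 1, hjm⟩) →
      dom Z = Uset u (j - 1) ∪ {p} → ⇑(ν p) '' dom Z = Uset u j := by
    intro Z p hp hdZ
    rw [hdZ, Set.image_union, Set.image_singleton, (hν p hp).1.2, (hν p hp).2, hUj]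
  constructor
  · -- (M1)
    intro X p hX hp hdX
    obtain ⟨α, hαA, hα⟩ := (hqsel X p hX hp hdX).1
    have hα'A : α⁻¹ ∈ AutSet Γ (Uset u j) := AutSet_inv_mem hαA
    have hγΓ : α⁻¹ * ν p ∈ Γ := Γ.mul_mem hα'A.1 (hν p hp).1.1
    have himg : ⇑(α⁻¹ * ν p) '' dom X = Uset u j := by
      rw [Equiv.Perm.coe_mul, Set.image_comp, hνdom X p hp hdX, hα'A.2]
    have hγr : (α⁻¹ * ν p) ((κ X)⁻¹ (qsel X)) = u ⟨j - 1, hjm⟩ := by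
      rw [Equiv.Perm.mul_apply, ← Equiv.Perm.mul_apply (ν p) ((κ X)⁻¹) (qsel X), ← hα]
      simp
    have hdomM : dom (M X) = dom X \ {(κ X)⁻¹ (qsel X)} := by
      rw [hM X, dom_restrict]
      exact Set.inter_eq_self_of_subset_right Set.diff_subset
    refine ⟨α⁻¹ * ν p, hγΓ, himg, ?_, ?_⟩
    · rw [hdomM, Set.image_diff (α⁻¹ * ν p).injective, Set.image_singleton, hγr, himg, hdiff]
    · rw [hM X, psmul_restrict, Set.image_diff (α⁻¹ * ν p).injective, Set.image_singleton,
        hγr, himg, hdiff]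
  · -- (M2)
    intro X Y pX pY hX hY hpX hpY hdX hdY hiso
    obtain ⟨γ₀, hγ₀, hXY⟩ := hiso
    have hcan := hκ X Y hX hY ⟨γ₀, hγ₀, hXY⟩
    have hκX := hκΓ X hX
    have hκY := hκΓ Y hY
    set β : Equiv.Perm U := (κ X)⁻¹ * (κ Y * γ₀) with hβ
    have hβΓ : β ∈ Γ := Γ.mul_mem (Γ.inv_mem hκX) (Γ.mul_mem hκY hγ₀)
    have hβX : psmul β X = X := by
      have h1 : psmul (κ Y * γ₀) X = psmul (κ X) X := by
        rw [psmul_mul, hXY, hcan]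
      calc psmul β X = psmul (κ X)⁻¹ (psmul (κ Y * γ₀) X) := psmul_mul _ _ _
        _ = psmul (κ X)⁻¹ (psmul (κ X) X) := by rw [h1]
        _ = X := by rw [← psmul_mul, inv_mul_cancel, psmul_one]
    have hβinvX : psmul β⁻¹ X = X := by
      conv_lhs => rw [← hβX]
      rw [← psmul_mul, inv_mul_cancel, psmul_one]
    have hνX := hνdom X pX hpX hdX
    have hνY := hνdom Y pY hpY hdY
    have hdXβi : ⇑β⁻¹ '' dom X = dom X := by rw [← dom_psmul, hβinvX]
    have hdγ₀ : ⇑γ₀ '' dom X = dom Y := by rw [← dom_psmul, hXY]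
    set τ : Equiv.Perm U := ν pY * γ₀ * β⁻¹ * (ν pX)⁻¹ with hτdef
    have hτ : τ ∈ AutSet Γ (Uset u j) := by
      constructor
      · exact Γ.mul_mem (Γ.mul_mem (Γ.mul_mem (hν pY hpY).1.1 hγ₀)
          (Γ.inv_mem hβΓ)) (Γ.inv_mem (hν pX hpX).1.1)
      · have hinv : ⇑(ν pX)⁻¹ '' Uset u j = dom X := by
          rw [← hνX, ← Set.image_comp]
          simp
        rw [hτdef]
        simp only [Equiv.Perm.coe_mul, Set.image_comp]
        rw [hinv, hdXβi, hdγ₀, hνY]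
    have hkey : ν pY * (κ Y)⁻¹ = τ * (ν pX * (κ X)⁻¹) := by
      rw [hτdef, hβ]; group
    have hsets : {q : U | (ν pX * (κ X)⁻¹) q ∈
          ptOrbit (AutSet Γ (Uset u j)) (u ⟨j - 1, hjm⟩)}
        = {q : U | (ν pY * (κ Y)⁻¹) q ∈
          ptOrbit (AutSet Γ (Uset u j)) (u ⟨j - 1, hjm⟩)} := by
      ext q
      simp only [Set.mem_setOf_eq]
      rw [hkey, Equiv.Perm.mul_apply]
      exact (ptOrbit_smul_iff hτ _ _).symm
    have hq : qsel X = qsel Y := by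
      have h1 := hqsel X pX hX hpX hdX
      have h2 := hqsel Y pY hY hpY hdY
      rw [hsets] at h1
      exact h1.unique h2
    refine ⟨γ₀ * β⁻¹, Γ.mul_mem hγ₀ (Γ.inv_mem hβΓ), ?_, ?_⟩
    · rw [psmul_mul, hβinvX, hXY]
    · have hκYinv : (κ Y)⁻¹ = (γ₀ * β⁻¹) * (κ X)⁻¹ := by rw [hβ]; group
      have hδr : (γ₀ * β⁻¹) ((κ X)⁻¹ (qsel X)) = (κ Y)⁻¹ (qsel Y) := by
        rw [hq, hκYinv]
        simp only [Equiv.Perm.mul_apply]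
      have hδdom : ⇑(γ₀ * β⁻¹) '' dom X = dom Y := by
        rw [Equiv.Perm.coe_mul, Set.image_comp, hdXβi, hdγ₀]
      rw [hM X, hM Y, psmul_restrict, Set.image_diff (γ₀ * β⁻¹).injective,
        Set.image_singleton, hδr, hδdom, psmul_mul, hβinvX, hXY]


end PrefixAssignment
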